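/- arXiv:1308.6175 — 2 statements merged into one kernel-verified Lean document; each statement's English description precedes it below -/
import Mathlib

section
/- Let C_0 ⊆ C_1 ⊆ ... ⊆ C_{a-1} ⊆ C_a = (ZMod 2)^n and C'_0 ⊆ C'_1 ⊆ ... ⊆ C'_{a-1} ⊆ C'_a = (ZMod 2)^n be two families of nested binary linear codes with C_i ⊆ C'_i for all i, and suppose the chain C'_0 ⊆ ... ⊆ C'_a is closed under Schur product. Then Γ'_CF (the code formula set of the primed chain) is an additive subgroup of ℤ^n containing Γ_CF, and hence Λ_CF ⊆ Γ'_CF, where Λ_CF is the smallest additive subgroup containing Γ_CF. -/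
noncomputable section

/-- The natural embedding of `(ZMod 2)^n` into `ℤ^n`, applying coordinatewise the map
sending `0` to `0` and `1` to `1`. -/
def psi {n : ℕ} (x : Fin n → ZMod 2) : Fin n → ℤ := fun k => ((x k).val : ℤ)

/-- The code formula set `Γ_CF = ψ(C₀) + 2ψ(C₁) + ... + 2^{a-1}ψ(C_{a-1}) + 2^a ℤ^n`
associated to a chain of binary codes `C₀ ⊆ C₁ ⊆ ... ⊆ C_a = (ZMod 2)^n`. -/
def GammaCF {n : ℕ} (a : ℕ) (C : ℕ → Submodule (ZMod 2) (Fin n → ZMod 2)) :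
    Set (Fin n → ℤ) :=
  { x | ∃ (c : ℕ → Fin n → ZMod 2) (l : Fin n → ℤ),
      (∀ i < a, c i ∈ C i) ∧
      x = (∑ i ∈ Finset.range a, (2 ^ i : ℤ) • psi (c i)) + (2 ^ a : ℤ) • l }


/-!
Adding two code formulas digit by digit produces a carry: for binary words `x, y` one has
`ψ(x + y) + 2 ψ(x ∗ y) = ψ(x) + ψ(y)`. Schur closure puts the carry `x ∗ y` of level `i` into
`C'_{i+1}`, so peeling off the lowest digit, `Γ_{a+1}(C) = ψ(C₀) + 2 Γ_a(C₁, C₂, …)`, turns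
additivity into an induction on `a`. Negation comes for free: `Γ'_CF` absorbs `2^a ℤ^n`, and
`-x = (2^a - 1) x + 2^a (-x)`.
-/

open Finset

lemma psi_zero {n : ℕ} : psi (0 : Fin n → ZMod 2) = 0 := by
  funext k
  simp [psi]

lemma psi_add_add_two_smul_psi_mul {n : ℕ} (x y : Fin n → ZMod 2) :
    psi (x + y) + (2 : ℤ) • psi (x * y) = psi x + psi y := by
  funext k
  have carry : ∀ v w : ZMod 2, ((v + w).val : ℤ) + 2 * (v * w).val = v.val + w.val := by
    decide
  simpa [psi] using carry (x k) (y k)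

lemma sum_range_succ_two_pow_zsmul_add {M : Type*} [AddCommGroup M] (a : ℕ) (g : ℕ → M)
    (l : M) :
    (∑ i ∈ range (a + 1), (2 ^ i : ℤ) • g i) + (2 ^ (a + 1) : ℤ) • l
      = g 0 + (2 : ℤ) • ((∑ i ∈ range a, (2 ^ i : ℤ) • g (i + 1)) + (2 ^ a : ℤ) • l) := by
  simp only [sum_range_succ', pow_succ', mul_smul, smul_add, smul_sum, pow_zero, one_smul]
  abel

lemma AddSubmonoid.neg_mem_of_forall_succ_nsmul_mem {M : Type*} [AddCommGroup M]
    (S : AddSubmonoid M) (k : ℕ) (hk : ∀ y, (k + 1) • y ∈ S) {x : M} (hx : x ∈ S) :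
    -x ∈ S := by
  have h : k • x + (k + 1) • -x = -x := by
    rw [succ_nsmul, smul_neg]
    abel
  exact h ▸ S.add_mem (S.nsmul_mem hx k) (hk (-x))

section GammaCF

variable {n : ℕ}

lemma mem_gammaCF_zero (C : ℕ → Submodule (ZMod 2) (Fin n → ZMod 2)) (x : Fin n → ℤ) :
    x ∈ GammaCF 0 C :=
  ⟨0, x, by simp, by simp⟩

lemma two_pow_smul_mem_gammaCF (a : ℕ) (C : ℕ → Submodule (ZMod 2) (Fin n → ZMod 2))
    (l : Fin n → ℤ) : (2 ^ a : ℤ) • l ∈ GammaCF a C :=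
  ⟨0, l, fun i _ => (C i).zero_mem, by simp [psi_zero]⟩

lemma zero_mem_gammaCF (a : ℕ) (C : ℕ → Submodule (ZMod 2) (Fin n → ZMod 2)) :
    (0 : Fin n → ℤ) ∈ GammaCF a C := by
  simpa using two_pow_smul_mem_gammaCF a C 0

lemma mem_gammaCF_succ {a : ℕ} {C : ℕ → Submodule (ZMod 2) (Fin n → ZMod 2)}
    {x : Fin n → ℤ} :
    x ∈ GammaCF (a + 1) C ↔
      ∃ c ∈ C 0, ∃ z ∈ GammaCF a (fun i => C (i + 1)), x = psi c + (2 : ℤ) • z := by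
  constructor
  · rintro ⟨c, l, hc, rfl⟩
    refine ⟨c 0, hc 0 a.succ_pos, _, ⟨fun i => c (i + 1), l, fun i hi => hc _ (by omega), rfl⟩,
      sum_range_succ_two_pow_zsmul_add a (fun i => psi (c i)) l⟩
  · rintro ⟨c, hc, _, ⟨f, l, hf, rfl⟩, rfl⟩
    refine ⟨fun i => Nat.casesOn i c f, l, ?_, ?_⟩
    · rintro (_ | i) hi
      exacts [hc, hf i (by omega)]
    · exact (sum_range_succ_two_pow_zsmul_add a (fun i => psi (Nat.casesOn i c f)) l).symm

lemma psi_mem_gammaCF {a : ℕ} {C : ℕ → Submodule (ZMod 2) (Fin n → ZMod 2)}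
    {e : Fin n → ZMod 2} (he : e ∈ C 0) : psi e ∈ GammaCF a C := by
  cases a with
  | zero => exact mem_gammaCF_zero C _
  | succ a => exact mem_gammaCF_succ.mpr ⟨e, he, 0, zero_mem_gammaCF a _, by simp⟩

lemma gammaCF_mono {a : ℕ} {C C' : ℕ → Submodule (ZMod 2) (Fin n → ZMod 2)}
    (h : ∀ i < a, C i ≤ C' i) : GammaCF a C ⊆ GammaCF a C' := by
  rintro x ⟨c, l, hc, rfl⟩
  exact ⟨c, l, fun i hi => h i hi (hc i hi), rfl⟩

lemma add_mem_gammaCF {a : ℕ} {C : ℕ → Submodule (ZMod 2) (Fin n → ZMod 2)}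
    (hschur : ∀ i < a, ∀ c ∈ C i, ∀ d ∈ C i, c * d ∈ C (i + 1))
    {x y : Fin n → ℤ} (hx : x ∈ GammaCF a C) (hy : y ∈ GammaCF a C) :
    x + y ∈ GammaCF a C := by
  induction a generalizing C x y with
  | zero => exact mem_gammaCF_zero C _
  | succ a ih =>
    obtain ⟨c, hc, z, hz, rfl⟩ := mem_gammaCF_succ.mp hx
    obtain ⟨d, hd, w, hw, rfl⟩ := mem_gammaCF_succ.mp hy
    have hschur_succ : ∀ i < a, ∀ u ∈ C (i + 1), ∀ v ∈ C (i + 1), u * v ∈ C (i + 1 + 1) :=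
      fun i hi => hschur (i + 1) (by omega)
    have hcarry : psi (c * d) ∈ GammaCF a (fun i => C (i + 1)) :=
      psi_mem_gammaCF (hschur 0 a.succ_pos c hc d hd)
    refine mem_gammaCF_succ.mpr ⟨c + d, (C 0).add_mem hc hd, psi (c * d) + (z + w),
      ih hschur_succ hcarry (ih hschur_succ hz hw), ?_⟩
    linear_combination (norm := module) -(psi_add_add_two_smul_psi_mul c d)

def gammaCFAddSubgroup (a : ℕ) (C : ℕ → Submodule (ZMod 2) (Fin n → ZMod 2))
    (hschur : ∀ i < a, ∀ c ∈ C i, ∀ d ∈ C i, c * d ∈ C (i + 1)) :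
    AddSubgroup (Fin n → ℤ) :=
  let S : AddSubmonoid (Fin n → ℤ) :=
    { carrier := GammaCF a C
      zero_mem' := zero_mem_gammaCF a C
      add_mem' := add_mem_gammaCF hschur }
  { S with
    neg_mem' := by
      obtain ⟨k, hk⟩ : ∃ k, 2 ^ a = k + 1 := Nat.exists_eq_add_one.mpr (by positivity)
      refine fun hx => S.neg_mem_of_forall_succ_nsmul_mem k (fun y => ?_) hx
      rw [← hk, ← natCast_zsmul]
      exact_mod_cast two_pow_smul_mem_gammaCF a C y }

end GammaCF

theorem lambdaCF_subset_gammaCF'_general {n a : ℕ}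
    (C C' : ℕ → Submodule (ZMod 2) (Fin n → ZMod 2))
    (hsub : ∀ i ≤ a, C i ≤ C' i)
    (hschur' : ∀ i < a, ∀ c ∈ C' i, ∀ d ∈ C' i, c * d ∈ C' (i + 1)) :
    (∃ G : AddSubgroup (Fin n → ℤ), (G : Set (Fin n → ℤ)) = GammaCF a C') ∧
    GammaCF a C ⊆ GammaCF a C' ∧
    (AddSubgroup.closure (GammaCF a C) : Set (Fin n → ℤ)) ⊆ GammaCF a C' := by
  have hsubset : GammaCF a C ⊆ GammaCF a C' := gammaCF_mono fun i hi => hsub i hi.le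
  exact ⟨⟨gammaCFAddSubgroup a C' hschur', rfl⟩, hsubset,
    (AddSubgroup.closure_le (gammaCFAddSubgroup a C' hschur')).mpr hsubset⟩

/-- If `C_i ⊆ C'_i` for all `i` and the primed chain is closed under
Schur product, then `Γ'_CF` is an additive subgroup of `ℤ^n` containing `Γ_CF`, and
hence `Λ_CF ⊆ Γ'_CF`. -/
theorem lambdaCF_subset_gammaCF' {n a : ℕ}
    (C C' : ℕ → Submodule (ZMod 2) (Fin n → ZMod 2))
    (hmono : ∀ i < a, C i ≤ C (i + 1)) (htop : C a = ⊤)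
    (hmono' : ∀ i < a, C' i ≤ C' (i + 1)) (htop' : C' a = ⊤)
    (hsub : ∀ i ≤ a, C i ≤ C' i)
    (hschur' : ∀ i < a, ∀ c ∈ C' i, ∀ d ∈ C' i, c * d ∈ C' (i + 1)) :
    (∃ G : AddSubgroup (Fin n → ℤ), (G : Set (Fin n → ℤ)) = GammaCF a C') ∧
    GammaCF a C ⊆ GammaCF a C' ∧
    (AddSubgroup.closure (GammaCF a C) : Set (Fin n → ℤ)) ⊆ GammaCF a C' :=
  lambdaCF_subset_gammaCF'_general C C' hsub hschur'
end
end

section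
/- Let C be a linear code over 𝒰_a of length n (a 𝒰_a-submodule of (Fin n → 𝒰_a)). Then the set Γ_A' := Φ(C) + 2^a ℤ^n = { Φ(c) + 2^a l | c ∈ C, l ∈ ℤ^n } is an additive subgroup of ℤ^n (i.e., a lattice) if and only if C is closed under shifted Schur product, i.e., for all c_1, c_2 ∈ C, (c_1 ∗ c_2)·u ∈ C. -/
noncomputable section

set_option synthInstance.maxHeartbeats 400000

/-- The quotient ring `𝒰_a = 𝔽₂[u]/u^a`. -/
abbrev Ua (a : ℕ) : Type :=
  Polynomial (ZMod 2) ⧸ Ideal.span {(Polynomial.X : Polynomial (ZMod 2)) ^ a}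

/-- The image `u` of the variable `X` in `𝒰_a`. -/
noncomputable def uU (a : ℕ) : Ua a := Ideal.Quotient.mk _ Polynomial.X

/-- The canonical representative (of degree `< a`) of an element of `𝒰_a`. -/
noncomputable def uaRep {a : ℕ} (x : Ua a) : Polynomial (ZMod 2) :=
  Function.surjInv
    (Ideal.Quotient.mk_surjective
      (I := Ideal.span {(Polynomial.X : Polynomial (ZMod 2)) ^ a})) x
    %ₘ (Polynomial.X ^ a)

/-- The coefficient `b_j` of `u^j` in `x = Σ_{j<a} b_j u^j ∈ 𝒰_a`. -/
noncomputable def uaCoeff {a : ℕ} (x : Ua a) (j : ℕ) : ZMod 2 := (uaRep x).coeff j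

/-- The map `Φ : 𝒰_a → ℤ` sending `Σ_{j<a} b_j u^j` to `Σ_{j<a} ψ(b_j) 2^j`. -/
noncomputable def PhiU {a : ℕ} (x : Ua a) : ℤ :=
  ∑ j ∈ Finset.range a, ((uaCoeff x j).val : ℤ) * 2 ^ j

/-- `Φ` extended componentwise to a map `(Fin n → 𝒰_a) → (Fin n → ℤ)`. -/
noncomputable def PhiV {n a : ℕ} (c : Fin n → Ua a) : Fin n → ℤ := fun k => PhiU (c k)

/-- The Construction A' set `Γ_{A'} = Φ(C) + 2^a ℤ^n` of a code `C ⊆ (Fin n → 𝒰_a)`. -/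
def GammaA' {n a : ℕ} (C : Set (Fin n → Ua a)) : Set (Fin n → ℤ) :=
  { x | ∃ c ∈ C, ∃ l : Fin n → ℤ, x = PhiV c + (2 ^ a : ℤ) • l }

/-- The Schur (Hadamard) product on `𝒰_a`:
`(Σ_j x_j u^j) ∗ (Σ_j y_j u^j) = Σ_j (x_j y_j) u^j`. -/
noncomputable def schurU {a : ℕ} (x y : Ua a) : Ua a :=
  Ideal.Quotient.mk _
    (∑ j ∈ Finset.range a, Polynomial.C (uaCoeff x j * uaCoeff y j) * Polynomial.X ^ j)

/-!
In binary, `x + y` is the bitwise sum and `x ∗ y` records the carries, so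
`Φ(x) + Φ(y) = Φ(x + y) + 2 Φ(x ∗ y)`; multiplying by `u` doubles `Φ` modulo `2^a`. Hence
`Φ(x) + Φ(y) ≡ Φ(x + y) + Φ((x ∗ y) u) (mod 2^a)`, and since `Φ` is a bijection onto `[0, 2^a)`,
membership in `Γ_{A'}` is a condition on residues modulo `2^a`.

If `Γ_{A'}` is a group, it contains `Φ(c₁) + Φ(c₂) - Φ(c₁ + c₂) ≡ Φ((c₁ ∗ c₂) u)`, which must then
be `Φ(c)` for a codeword `c = (c₁ ∗ c₂) u`. Conversely, iterating `(x, y) ↦ (x + y, (x ∗ y) u)`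
inside `C` raises the lowest nonzero coefficient of `y` until `y = 0`, so `Φ(c₁) + Φ(c₂)` is
congruent to `Φ` of a codeword; negatives come for free because `Γ_{A'} ⊇ 2^a ℤ^n`.
-/

open Polynomial Finset

lemma sum_val_mul_two_pow_lt (f : ℕ → ZMod 2) (a : ℕ) :
    ∑ j ∈ range a, ((f j).val : ℤ) * 2 ^ j < 2 ^ a := by
  induction a with
  | zero => simp
  | succ a ih =>
    have hf : ((f a).val : ℤ) ≤ 1 := by have := ZMod.val_lt (f a); omega
    have h2 : (0 : ℤ) < 2 ^ a := by positivity
    rw [sum_range_succ, pow_succ]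
    nlinarith

lemma eq_of_sum_val_mul_two_pow_eq {f g : ℕ → ZMod 2} {a : ℕ}
    (h : ∑ j ∈ range a, ((f j).val : ℤ) * 2 ^ j = ∑ j ∈ range a, ((g j).val : ℤ) * 2 ^ j) :
    ∀ j < a, f j = g j := by
  induction a generalizing f g with
  | zero => intro j hj; omega
  | succ a ih =>
    simp only [sum_range_succ', pow_succ, ← mul_assoc, ← sum_mul, pow_zero, mul_one] at h
    have hf := ZMod.val_lt (f 0)
    have hg := ZMod.val_lt (g 0)
    have h0 : (f 0).val = (g 0).val := by omega
    have hrest : ∑ j ∈ range a, ((f (j + 1)).val : ℤ) * 2 ^ j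
        = ∑ j ∈ range a, ((g (j + 1)).val : ℤ) * 2 ^ j := by omega
    rintro (_ | j) hj
    · exact ZMod.val_injective 2 h0
    · exact ih hrest j (by omega)

variable {a : ℕ}

lemma mk_uaRep (x : Ua a) : Ideal.Quotient.mk _ (uaRep x) = x := by
  conv_rhs => rw [← Function.surjInv_eq Ideal.Quotient.mk_surjective x]
  rw [uaRep, Ideal.Quotient.eq, Ideal.mem_span_singleton,
    modByMonic_eq_sub_mul_div, sub_sub_cancel_left, dvd_neg]
  exact dvd_mul_right _ _

lemma uaRep_mk (p : (ZMod 2)[X]) :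
    uaRep (Ideal.Quotient.mk (Ideal.span {(X : (ZMod 2)[X]) ^ a}) p) = p %ₘ X ^ a :=
  modByMonic_eq_of_dvd_sub (monic_X_pow a) <| by
    rw [← Ideal.mem_span_singleton, ← Ideal.Quotient.eq]
    exact Function.surjInv_eq _ _

lemma uaCoeff_mk (p : (ZMod 2)[X]) (j : ℕ) :
    uaCoeff (Ideal.Quotient.mk (Ideal.span {(X : (ZMod 2)[X]) ^ a}) p) j
      = if j < a then p.coeff j else 0 := by
  rw [uaCoeff, uaRep_mk]
  split_ifs with hj
  · conv_rhs => rw [← modByMonic_add_div p (X ^ a)]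
    rw [coeff_add, coeff_X_pow_mul', if_neg (by omega), add_zero]
  · refine coeff_eq_zero_of_degree_lt ((degree_modByMonic_lt _ (monic_X_pow a)).trans_le ?_)
    rw [degree_X_pow]
    exact_mod_cast not_lt.1 hj

lemma uaCoeff_eq_zero_of_le (x : Ua a) {j : ℕ} (hj : a ≤ j) : uaCoeff x j = 0 := by
  rw [← mk_uaRep x, uaCoeff_mk, if_neg (by omega)]

lemma eq_of_uaCoeff_eq {x y : Ua a} (h : ∀ j < a, uaCoeff x j = uaCoeff y j) : x = y := by
  rw [← mk_uaRep x, ← mk_uaRep y]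
  congr 1
  ext j
  by_cases hj : j < a
  · exact h j hj
  · exact (uaCoeff_eq_zero_of_le x (not_lt.1 hj)).trans
      (uaCoeff_eq_zero_of_le y (not_lt.1 hj)).symm

lemma uaCoeff_zero (j : ℕ) : uaCoeff (0 : Ua a) j = 0 := by
  simpa using uaCoeff_mk (a := a) 0 j

lemma uaCoeff_add (x y : Ua a) (j : ℕ) : uaCoeff (x + y) j = uaCoeff x j + uaCoeff y j := by
  have h := uaCoeff_mk (a := a) (uaRep x + uaRep y) j
  rw [map_add, mk_uaRep, mk_uaRep, coeff_add] at h
  rw [h]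
  split_ifs with hj
  · rfl
  · rw [uaCoeff_eq_zero_of_le x (not_lt.1 hj), uaCoeff_eq_zero_of_le y (not_lt.1 hj), add_zero]

lemma uaCoeff_schurU (x y : Ua a) (j : ℕ) :
    uaCoeff (schurU x y) j = uaCoeff x j * uaCoeff y j := by
  rw [schurU, uaCoeff_mk, finsetSum_coeff]
  split_ifs with hj
  · simp only [coeff_C_mul_X_pow, sum_ite_eq, mem_range, if_pos hj]
  · rw [uaCoeff_eq_zero_of_le x (not_lt.1 hj), zero_mul]

lemma mul_uU_eq_mk (x : Ua a) :
    x * uU a = Ideal.Quotient.mk (Ideal.span {(X : (ZMod 2)[X]) ^ a}) (uaRep x * X) := by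
  rw [map_mul, mk_uaRep, uU]

lemma uaCoeff_mul_uU_zero (x : Ua a) : uaCoeff (x * uU a) 0 = 0 := by
  rw [mul_uU_eq_mk, uaCoeff_mk, coeff_mul_X_zero, ite_self]

lemma uaCoeff_mul_uU_succ (x : Ua a) (j : ℕ) :
    uaCoeff (x * uU a) (j + 1) = if j + 1 < a then uaCoeff x j else 0 := by
  rw [mul_uU_eq_mk, uaCoeff_mk, coeff_mul_X, uaCoeff]

lemma PhiU_nonneg (x : Ua a) : 0 ≤ PhiU x := by
  unfold PhiU; positivity

lemma PhiU_lt (x : Ua a) : PhiU x < 2 ^ a :=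
  sum_val_mul_two_pow_lt _ a

lemma PhiU_injective : Function.Injective (PhiU (a := a)) :=
  fun _ _ h => eq_of_uaCoeff_eq (eq_of_sum_val_mul_two_pow_eq h)

lemma eq_of_PhiU_modEq {x y : Ua a} (h : PhiU x ≡ PhiU y [ZMOD 2 ^ a]) : x = y := by
  rw [Int.ModEq, Int.emod_eq_of_lt (PhiU_nonneg x) (PhiU_lt x),
    Int.emod_eq_of_lt (PhiU_nonneg y) (PhiU_lt y)] at h
  exact PhiU_injective h

lemma PhiU_zero : PhiU (0 : Ua a) = 0 := by
  simp [PhiU, uaCoeff_zero]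

lemma val_add_add_two_mul_val_mul (b c : ZMod 2) :
    ((b + c).val : ℤ) + 2 * (b * c).val = b.val + c.val := by
  revert b c; decide

lemma PhiU_add_PhiU (x y : Ua a) :
    PhiU x + PhiU y = PhiU (x + y) + 2 * PhiU (schurU x y) := by
  simp only [PhiU, mul_sum, ← sum_add_distrib, uaCoeff_add, uaCoeff_schurU]
  refine sum_congr rfl fun j _ => ?_
  linear_combination (-(2 : ℤ) ^ j) * val_add_add_two_mul_val_mul (uaCoeff x j) (uaCoeff y j)

lemma PhiU_mul_uU_modEq (x : Ua a) : PhiU (x * uU a) ≡ 2 * PhiU x [ZMOD 2 ^ a] := by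
  cases a with
  | zero => simp [Int.modEq_one]
  | succ m =>
    have hshift :
        PhiU (x * uU (m + 1)) = ∑ j ∈ range m, ((uaCoeff x j).val : ℤ) * 2 ^ (j + 1) := by
      rw [PhiU, sum_range_succ', uaCoeff_mul_uU_zero, ZMod.val_zero, Nat.cast_zero, zero_mul,
        add_zero]
      refine sum_congr rfl fun j hj => ?_
      rw [uaCoeff_mul_uU_succ, if_pos (by simpa using hj)]
    have hdouble : 2 * PhiU x = ∑ j ∈ range m, ((uaCoeff x j).val : ℤ) * 2 ^ (j + 1)
        + (uaCoeff x m).val * 2 ^ (m + 1) := by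
      rw [PhiU, mul_sum, sum_range_succ]
      simp only [pow_succ]
      ring_nf
    exact Int.modEq_iff_add_fac.2 ⟨(uaCoeff x m).val, by rw [hshift, hdouble]; ring⟩

lemma PhiU_add_modEq (x y : Ua a) :
    PhiU (x + y) + PhiU (schurU x y * uU a) ≡ PhiU x + PhiU y [ZMOD 2 ^ a] := by
  rw [PhiU_add_PhiU x y]
  exact (PhiU_mul_uU_modEq _).add_left _

lemma mem_gammaA'_iff {n : ℕ} {C : Set (Fin n → Ua a)} {v : Fin n → ℤ} :
    v ∈ GammaA' C ↔ ∃ c ∈ C, ∀ k, PhiU (c k) ≡ v k [ZMOD 2 ^ a] := by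
  constructor
  · rintro ⟨c, hc, l, rfl⟩
    exact ⟨c, hc, fun k => Int.modEq_iff_add_fac.2 ⟨l k, rfl⟩⟩
  · rintro ⟨c, hc, h⟩
    choose l hl using fun k => Int.modEq_iff_add_fac.1 (h k)
    exact ⟨c, hc, l, funext hl⟩

lemma AddSubmonoid.neg_mem_of_nsmul_mem {M : Type*} [AddCommGroup M] (S : AddSubmonoid M)
    {N : ℕ} (hN : 0 < N) (hS : ∀ w, N • w ∈ S) {v : M} (hv : v ∈ S) : -v ∈ S := by
  obtain ⟨m, rfl⟩ : ∃ m, N = m + 1 := ⟨N - 1, by omega⟩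
  have h : -v = m • v + (m + 1) • -v := by
    rw [smul_neg, succ_nsmul]; abel
  rw [h]
  exact S.add_mem (S.nsmul_mem hv m) (hS _)

section ShiftedSchurClosed

variable {ι : Type*} (C : AddSubmonoid (ι → Ua a))
  (hC : ∀ c₁ ∈ C, ∀ c₂ ∈ C, (fun k => schurU (c₁ k) (c₂ k) * uU a) ∈ C)
include hC

lemma exists_mem_PhiU_modEq_add_of_coeff_eq_zero (m : ℕ) {x y : ι → Ua a} (hx : x ∈ C)
    (hy : y ∈ C) (hy_low : ∀ k i, i + m < a → uaCoeff (y k) i = 0) :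
    ∃ z ∈ C, ∀ k, PhiU (z k) ≡ PhiU (x k) + PhiU (y k) [ZMOD 2 ^ a] := by
  induction m generalizing x y with
  | zero =>
    have hy0 : ∀ k, y k = 0 := fun k =>
      eq_of_uaCoeff_eq fun i hi => (hy_low k i hi).trans (uaCoeff_zero i).symm
    exact ⟨x, hx, fun k => by rw [hy0, PhiU_zero, add_zero]⟩
  | succ m ih =>
    have hlow : ∀ k i, i + m < a → uaCoeff (schurU (x k) (y k) * uU a) i = 0 := by
      rintro k (_ | i) hi
      · exact uaCoeff_mul_uU_zero _
      · rw [uaCoeff_mul_uU_succ, uaCoeff_schurU, hy_low k i (by omega), mul_zero, ite_self]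
    obtain ⟨z, hz, hzmod⟩ := ih (C.add_mem hx hy) (hC x hx y hy) hlow
    exact ⟨z, hz, fun k => (hzmod k).trans (PhiU_add_modEq (x k) (y k))⟩

lemma exists_mem_PhiU_modEq_add {x y : ι → Ua a} (hx : x ∈ C) (hy : y ∈ C) :
    ∃ z ∈ C, ∀ k, PhiU (z k) ≡ PhiU (x k) + PhiU (y k) [ZMOD 2 ^ a] :=
  exists_mem_PhiU_modEq_add_of_coeff_eq_zero C hC a hx hy fun _ _ h => by omega

end ShiftedSchurClosed

section GammaA'

variable {n : ℕ} (C : AddSubmonoid (Fin n → Ua a))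

lemma nsmul_mem_gammaA' (l : Fin n → ℤ) : 2 ^ a • l ∈ GammaA' (C : Set (Fin n → Ua a)) :=
  mem_gammaA'_iff.2 ⟨0, C.zero_mem, fun k => Int.modEq_iff_add_fac.2 ⟨l k, by simp [PhiU_zero]⟩⟩

def gammaA'AddSubmonoid
    (hC : ∀ c₁ ∈ C, ∀ c₂ ∈ C, (fun k => schurU (c₁ k) (c₂ k) * uU a) ∈ C) :
    AddSubmonoid (Fin n → ℤ) where
  carrier := GammaA' (C : Set (Fin n → Ua a))
  zero_mem' := by simpa using nsmul_mem_gammaA' C 0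
  add_mem' := by
    rintro v w hv hw
    obtain ⟨c₁, hc₁, hv⟩ := mem_gammaA'_iff.1 hv
    obtain ⟨c₂, hc₂, hw⟩ := mem_gammaA'_iff.1 hw
    obtain ⟨z, hz, hzmod⟩ := exists_mem_PhiU_modEq_add C hC hc₁ hc₂
    exact mem_gammaA'_iff.2 ⟨z, hz, fun k => (hzmod k).trans ((hv k).add (hw k))⟩

def gammaA'AddSubgroup
    (hC : ∀ c₁ ∈ C, ∀ c₂ ∈ C, (fun k => schurU (c₁ k) (c₂ k) * uU a) ∈ C) :
    AddSubgroup (Fin n → ℤ) :=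
  { gammaA'AddSubmonoid C hC with
    neg_mem' := (gammaA'AddSubmonoid C hC).neg_mem_of_nsmul_mem (Nat.two_pow_pos a)
      (nsmul_mem_gammaA' C) }

variable {C}

lemma shifted_schur_mem_of_coe_eq_gammaA' {G : AddSubgroup (Fin n → ℤ)}
    (hG : (G : Set (Fin n → ℤ)) = GammaA' (C : Set (Fin n → Ua a)))
    {c₁ c₂ : Fin n → Ua a} (hc₁ : c₁ ∈ C) (hc₂ : c₂ ∈ C) :
    (fun k => schurU (c₁ k) (c₂ k) * uU a) ∈ C := by
  have hPhiV : ∀ c ∈ C, PhiV c ∈ G := fun c hc => by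
    rw [← SetLike.mem_coe, hG]
    exact mem_gammaA'_iff.2 ⟨c, hc, fun _ => Int.ModEq.refl _⟩
  have hcarry : PhiV c₁ + PhiV c₂ - PhiV (c₁ + c₂) ∈ G :=
    sub_mem (add_mem (hPhiV c₁ hc₁) (hPhiV c₂ hc₂)) (hPhiV _ (C.add_mem hc₁ hc₂))
  rw [← SetLike.mem_coe, hG, mem_gammaA'_iff] at hcarry
  obtain ⟨c, hc, hcmod⟩ := hcarry
  suffices h : (fun k => schurU (c₁ k) (c₂ k) * uU a) = c from h ▸ hc
  funext k
  refine eq_of_PhiU_modEq ((hcmod k).trans ?_).symm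
  simpa [PhiV] using ((PhiU_add_modEq (c₁ k) (c₂ k)).sub_right (PhiU (c₁ k + c₂ k))).symm

end GammaA'

/-- For a linear code `C` over `𝒰_a`, the Construction A' set
`Γ_{A'} = Φ(C) + 2^a ℤ^n` is an additive subgroup of `ℤ^n` (a lattice) if and only if
`C` is closed under shifted Schur product: `(c₁ ∗ c₂)·u ∈ C` for all `c₁, c₂ ∈ C`. -/
theorem gammaA'_lattice_iff_shifted_schur {n a : ℕ}
    (C : Submodule (Ua a) (Fin n → Ua a)) :
    (∃ G : AddSubgroup (Fin n → ℤ),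
        (G : Set (Fin n → ℤ)) = GammaA' (C : Set (Fin n → Ua a)))
      ↔ ∀ c₁ ∈ C, ∀ c₂ ∈ C, (fun k => schurU (c₁ k) (c₂ k) * uU a) ∈ C := by
  constructor
  · rintro ⟨G, hG⟩ c₁ hc₁ c₂ hc₂
    exact shifted_schur_mem_of_coe_eq_gammaA' (C := C.toAddSubmonoid) hG hc₁ hc₂
  · intro hC
    exact ⟨gammaA'AddSubgroup C.toAddSubmonoid hC, rfl⟩
end
end
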